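/- arXiv:2004.12199 — 2 statements merged into one kernel-verified Lean document; each statement's English description precedes it below -/
import Mathlib

section
/- If x̂ minimizes the nLasso objective h over ℝ^V and ŷ maximizes the dual objective D over all feasible flows, then the flow conservation laws hold: −div_i(ŷ) = x̂_i − 1 for every seed node i ∈ S, and −div_i(ŷ) = α x̂_i for every non-seed node i ∉ S. -/
open Finset

/-- Total variation of a graph signal `x` w.r.t. oriented edge set `E` and weights `W`. -/
noncomputable def TV {n : ℕ} (E : Finset (Fin n × Fin n)) (W : Fin n × Fin n → ℝ)
    (x : Fin n → ℝ) : ℝ :=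
  ∑ e ∈ E, W e * |x e.1 - x e.2|

/-- The network Lasso objective. -/
noncomputable def nLasso {n : ℕ} (E : Finset (Fin n × Fin n)) (W : Fin n × Fin n → ℝ)
    (S : Finset (Fin n)) (α lam : ℝ) (x : Fin n → ℝ) : ℝ :=
  ∑ i ∈ S, (x i - 1) ^ 2 / 2 + ∑ i ∈ Sᶜ, α * x i ^ 2 / 2 + lam * TV E W x

/-- Divergence of the flow `y` at node `i`: outgoing minus incoming flow. -/
noncomputable def divg {n : ℕ} (E : Finset (Fin n × Fin n)) (y : Fin n × Fin n → ℝ)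
    (i : Fin n) : ℝ :=
  ∑ e ∈ E.filter (fun e => e.1 = i), y e - ∑ e ∈ E.filter (fun e => e.2 = i), y e

/-- The dual (flow) objective of the network Lasso. -/
noncomputable def dualObj {n : ℕ} (E : Finset (Fin n × Fin n)) (S : Finset (Fin n))
    (α : ℝ) (y : Fin n × Fin n → ℝ) : ℝ :=
  -∑ i ∈ S, (divg E y i ^ 2 / 2 - divg E y i) - ∑ i ∈ Sᶜ, divg E y i ^ 2 / (2 * α)

/-- The boundary of a node set `C`: edges with exactly one endpoint in `C`. -/
def bdry {n : ℕ} (E : Finset (Fin n × Fin n)) (C : Finset (Fin n)) :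
    Finset (Fin n × Fin n) :=
  E.filter (fun e => (e.1 ∈ C ∧ e.2 ∉ C) ∨ (e.1 ∉ C ∧ e.2 ∈ C))

/-!
A flow `y` determines the signal `x(y)ᵢ = aᵢ - divᵢ(y) / wᵢ`, where `w = 1, a = 1` on seeds and
`w = α, a = 0` elsewhere, and completing the square gives, for every `x`,
`Σᵢ wᵢ (xᵢ - aᵢ)² / 2 + Σₑ yₑ (x_{e.1} - x_{e.2}) = Σᵢ wᵢ (xᵢ - x(y)ᵢ)² / 2 + D(y)`.
Feasibility of `ŷ` bounds the left side by `h(x)`, while dual optimality, tested on perturbations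
of `ŷ` along single edges, makes that bound tight at `x(ŷ)`. Hence
`h(x̂) ≥ ‖x̂ - x(ŷ)‖²_w / 2 + h(x(ŷ)) ≥ ‖x̂ - x(ŷ)‖²_w / 2 + h(x̂)`, so `x̂ = x(ŷ)`,
which is the conservation law.
-/

lemma eq_of_forall_pos_mul_le_sq_mul {a b G Q : ℝ} (hab : a ≤ b) (hG : 0 < G)
    (h : ∀ t, 0 < t → a + t ≤ b → t * G ≤ t ^ 2 * Q) : a = b := by
  by_contra hne
  have hQ : 0 < |Q| + 1 := by positivity
  set t := min (b - a) (G / (|Q| + 1))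
  have ht : 0 < t := lt_min (by linarith [lt_of_le_of_ne hab hne]) (by positivity)
  have hGt : G ≤ t * Q := by
    have := h t ht (by linarith [min_le_left (b - a) (G / (|Q| + 1))])
    nlinarith
  have htQ : t * |Q| < G := calc
    t * |Q| ≤ G / (|Q| + 1) * |Q| := by gcongr; exact min_le_right _ _
    _ < G := by rw [div_mul_eq_mul_div, div_lt_iff₀ hQ]; linarith
  linarith [mul_le_mul_of_nonneg_left (le_abs_self Q) ht.le]

/-- The first-order condition for `a` to maximize on `[-b, b]` a function whose increment
from `a` to `a + t` is `t * G - t ^ 2 * Q`. -/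
lemma mul_eq_mul_abs_of_forall_mul_le_sq_mul {a b G Q : ℝ} (ha : |a| ≤ b)
    (h : ∀ t, |a + t| ≤ b → t * G ≤ t ^ 2 * Q) : a * G = b * |G| := by
  obtain ⟨hba, hab⟩ := abs_le.mp ha
  rcases lt_trichotomy G 0 with hG | rfl | hG
  · have : -a = b := by
      refine eq_of_forall_pos_mul_le_sq_mul (Q := Q) (by linarith) (neg_pos.mpr hG)
        fun t ht hle => ?_
      have := h (-t) (abs_le.mpr ⟨by linarith, by linarith⟩)
      linarith
    rw [abs_of_neg hG, ← this]; ring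
  · simp
  · rw [abs_of_pos hG, eq_of_forall_pos_mul_le_sq_mul hab hG fun t ht hle =>
      h t (abs_le.mpr ⟨by linarith, hle⟩)]

section WeightedLasso

variable {n : ℕ} (E : Finset (Fin n × Fin n))

lemma divg_add_smul (y z : Fin n × Fin n → ℝ) (t : ℝ) (i : Fin n) :
    divg E (y + t • z) i = divg E y i + t * divg E z i := by
  simp only [divg, Pi.add_apply, Pi.smul_apply, smul_eq_mul, sum_add_distrib, ← mul_sum]
  ring

lemma sum_mul_sub_eq_sum_divg_mul (y : Fin n × Fin n → ℝ) (x : Fin n → ℝ) :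
    ∑ e ∈ E, y e * (x e.1 - x e.2) = ∑ i, divg E y i * x i := by
  have fiberwise : ∀ f : Fin n × Fin n → Fin n,
      ∑ e ∈ E, y e * x (f e) = ∑ i, (∑ e ∈ E.filter (fun e => f e = i), y e) * x i := by
    intro f
    rw [← sum_fiberwise E f]
    refine sum_congr rfl fun i _ => ?_
    rw [sum_mul]
    exact sum_congr rfl fun e he => by rw [(mem_filter.mp he).2]
  simp only [mul_sub, sum_sub_distrib, fiberwise, divg, sub_mul]

lemma sum_divg_single_mul {e : Fin n × Fin n} (he : e ∈ E) (x : Fin n → ℝ) :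
    ∑ i, divg E (Pi.single e 1) i * x i = x e.1 - x e.2 := by
  rw [← sum_mul_sub_eq_sum_divg_mul]
  simp [Pi.single_apply, he]

variable (w a : Fin n → ℝ) (b : Fin n × Fin n → ℝ)

noncomputable def weightedSqDist (x : Fin n → ℝ) : ℝ :=
  ∑ i, w i * (x i - a i) ^ 2 / 2

noncomputable def lassoPrimal (x : Fin n → ℝ) : ℝ :=
  weightedSqDist w a x + ∑ e ∈ E, b e * |x e.1 - x e.2|

noncomputable def lassoDual (y : Fin n × Fin n → ℝ) : ℝ :=
  -∑ i, (divg E y i ^ 2 / (2 * w i) - a i * divg E y i)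

noncomputable def signalOfFlow (y : Fin n × Fin n → ℝ) (i : Fin n) : ℝ :=
  a i - divg E y i / w i

lemma lassoDual_add_smul (y z : Fin n × Fin n → ℝ) (t : ℝ) :
    lassoDual E w a (y + t • z) = lassoDual E w a y
      + t * ∑ i, divg E z i * signalOfFlow E w a y i
      - t ^ 2 * ∑ i, divg E z i ^ 2 / (2 * w i) := by
  simp only [lassoDual, signalOfFlow, divg_add_smul, mul_sum, ← sum_neg_distrib,
    ← sum_add_distrib, ← sum_sub_distrib]
  exact sum_congr rfl fun i _ => by ring

def IsFeasibleFlow (y : Fin n × Fin n → ℝ) : Prop :=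
  ∀ e ∈ E, |y e| ≤ b e

variable {E w a b}

lemma weightedSqDist_add_sum_mul_sub (hw : ∀ i, w i ≠ 0)
    (x : Fin n → ℝ) (y : Fin n × Fin n → ℝ) :
    weightedSqDist w a x + ∑ e ∈ E, y e * (x e.1 - x e.2)
      = weightedSqDist w (signalOfFlow E w a y) x + lassoDual E w a y := by
  rw [sum_mul_sub_eq_sum_divg_mul, weightedSqDist, weightedSqDist, lassoDual,
    ← sum_add_distrib, ← sub_eq_add_neg, ← sum_sub_distrib]
  refine sum_congr rfl fun i _ => ?_
  rw [signalOfFlow]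
  field_simp [hw i]
  ring

lemma eq_of_weightedSqDist_nonpos (hw : ∀ i, 0 < w i) {x : Fin n → ℝ}
    (h : weightedSqDist w a x ≤ 0) : x = a := by
  have hterm : ∀ i ∈ univ, 0 ≤ w i * (x i - a i) ^ 2 / 2 :=
    fun i _ => by have := hw i; positivity
  have hzero := (sum_eq_zero_iff_of_nonneg hterm).mp (le_antisymm h (sum_nonneg hterm))
  funext i
  simpa [(hw i).ne', sub_eq_zero] using hzero i (mem_univ i)

/-- Complementary slackness, obtained by perturbing `y` along the single edge `e`. -/
lemma flow_mul_sub_signalOfFlow_eq {y : Fin n × Fin n → ℝ} (hy : IsFeasibleFlow E b y)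
    (hmax : ∀ y', IsFeasibleFlow E b y' → lassoDual E w a y' ≤ lassoDual E w a y)
    {e : Fin n × Fin n} (he : e ∈ E) :
    y e * (signalOfFlow E w a y e.1 - signalOfFlow E w a y e.2)
      = b e * |signalOfFlow E w a y e.1 - signalOfFlow E w a y e.2| := by
  refine mul_eq_mul_abs_of_forall_mul_le_sq_mul
    (Q := ∑ i, divg E (Pi.single e 1) i ^ 2 / (2 * w i)) (hy e he) fun t ht => ?_
  have hfeas : IsFeasibleFlow E b (y + t • Pi.single e 1) := fun e' he' => by
    rcases eq_or_ne e' e with rfl | hne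
    · simpa using ht
    · simpa [hne] using hy e' he'
  have := hmax _ hfeas
  rw [lassoDual_add_smul, sum_divg_single_mul E he] at this
  linarith

lemma lassoPrimal_signalOfFlow_eq (hw : ∀ i, w i ≠ 0) {y : Fin n × Fin n → ℝ}
    (hy : IsFeasibleFlow E b y)
    (hmax : ∀ y', IsFeasibleFlow E b y' → lassoDual E w a y' ≤ lassoDual E w a y) :
    lassoPrimal E w a b (signalOfFlow E w a y) = lassoDual E w a y := by
  have hself : weightedSqDist w (signalOfFlow E w a y) (signalOfFlow E w a y) = 0 := by
    simp [weightedSqDist]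
  rw [lassoPrimal, ← sum_congr rfl fun e he => flow_mul_sub_signalOfFlow_eq hy hmax he,
    weightedSqDist_add_sum_mul_sub hw, hself, zero_add]

lemma weightedSqDist_add_lassoDual_le (hw : ∀ i, w i ≠ 0) {y : Fin n × Fin n → ℝ}
    (hy : IsFeasibleFlow E b y) (x : Fin n → ℝ) :
    weightedSqDist w (signalOfFlow E w a y) x + lassoDual E w a y ≤ lassoPrimal E w a b x := by
  rw [← weightedSqDist_add_sum_mul_sub (a := a) hw, lassoPrimal]
  gcongr weightedSqDist w a x + ?_
  refine sum_le_sum fun e he => ?_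
  calc y e * (x e.1 - x e.2) ≤ |y e| * |x e.1 - x e.2| := by rw [← abs_mul]; exact le_abs_self _
    _ ≤ b e * |x e.1 - x e.2| := by gcongr; exact hy e he

theorem neg_divg_eq_of_optimal (hw : ∀ i, 0 < w i) {x : Fin n → ℝ} {y : Fin n × Fin n → ℝ}
    (hmin : ∀ z, lassoPrimal E w a b x ≤ lassoPrimal E w a b z) (hy : IsFeasibleFlow E b y)
    (hmax : ∀ y', IsFeasibleFlow E b y' → lassoDual E w a y' ≤ lassoDual E w a y) (i : Fin n) :
    -divg E y i = w i * (x i - a i) := by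
  have hw' : ∀ i, w i ≠ 0 := fun i => (hw i).ne'
  have hx : x = signalOfFlow E w a y := by
    refine eq_of_weightedSqDist_nonpos hw ?_
    linarith [weightedSqDist_add_lassoDual_le (a := a) hw' hy x,
      lassoPrimal_signalOfFlow_eq hw' hy hmax, hmin (signalOfFlow E w a y)]
  rw [hx, signalOfFlow]
  field_simp [hw' i]
  ring

end WeightedLasso

section NetworkLasso

variable {n : ℕ} (S : Finset (Fin n)) (α : ℝ)

def seedWeight (i : Fin n) : ℝ :=
  if i ∈ S then 1 else α

def seedIndicator (i : Fin n) : ℝ :=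
  if i ∈ S then 1 else 0

variable (E : Finset (Fin n × Fin n))

lemma nLasso_eq_lassoPrimal (W : Fin n × Fin n → ℝ) (lam : ℝ) (x : Fin n → ℝ) :
    nLasso E W S α lam x
      = lassoPrimal E (seedWeight S α) (seedIndicator S) (fun e => lam * W e) x := by
  rw [nLasso, lassoPrimal, weightedSqDist, TV, mul_sum, ← sum_add_sum_compl S]
  congr 1
  · congr 1
    · exact sum_congr rfl fun i hi => by simp [seedWeight, seedIndicator, hi]
    · exact sum_congr rfl fun i hi => by simp [seedWeight, seedIndicator, mem_compl.mp hi]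
  · exact sum_congr rfl fun e _ => by ring

lemma dualObj_eq_lassoDual (y : Fin n × Fin n → ℝ) :
    dualObj E S α y = lassoDual E (seedWeight S α) (seedIndicator S) y := by
  rw [dualObj, lassoDual, ← sum_add_sum_compl S, neg_add, ← sub_eq_add_neg]
  congr 1
  · exact congrArg Neg.neg (sum_congr rfl fun i hi => by simp [seedWeight, seedIndicator, hi])
  · exact sum_congr rfl fun i hi => by simp [seedWeight, seedIndicator, mem_compl.mp hi]

end NetworkLasso

theorem nLasso_optimal_flow_conservation_general
    (n : ℕ) (E : Finset (Fin n × Fin n)) (W : Fin n × Fin n → ℝ) (S : Finset (Fin n))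
    (α lam : ℝ) (hα : 0 < α)
    (xhat : Fin n → ℝ) (yhat : Fin n × Fin n → ℝ)
    (hprimal : ∀ z : Fin n → ℝ, nLasso E W S α lam xhat ≤ nLasso E W S α lam z)
    (hfeas : ∀ e ∈ E, |yhat e| ≤ lam * W e)
    (hdual : ∀ y : Fin n × Fin n → ℝ, (∀ e ∈ E, |y e| ≤ lam * W e) →
      dualObj E S α y ≤ dualObj E S α yhat) :
    (∀ i ∈ S, -divg E yhat i = xhat i - 1) ∧
    (∀ i ∉ S, -divg E yhat i = α * xhat i) := by
  have hw : ∀ i, 0 < seedWeight S α i := fun i => by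
    unfold seedWeight; split_ifs <;> linarith
  have key := neg_divg_eq_of_optimal hw
    (by simpa only [nLasso_eq_lassoPrimal] using hprimal) hfeas
    (by simpa only [dualObj_eq_lassoDual, IsFeasibleFlow] using hdual)
  exact ⟨fun i hi => by simpa [seedWeight, seedIndicator, hi] using key i,
    fun i hi => by simpa [seedWeight, seedIndicator, hi] using key i⟩

/-- At a primal-dual optimal pair, the flow conservation laws hold:
`-div_i(ŷ) = x̂_i - 1` on seed nodes and `-div_i(ŷ) = α x̂_i` on non-seed nodes. -/
theorem nLasso_optimal_flow_conservation
    (n : ℕ) (E : Finset (Fin n × Fin n)) (hE : ∀ e ∈ E, e.1 < e.2)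
    (W : Fin n × Fin n → ℝ) (hW : ∀ e ∈ E, 0 < W e)
    (S : Finset (Fin n)) (hS : S.Nonempty)
    (α lam : ℝ) (hα : 0 < α) (hlam : 0 < lam)
    (xhat : Fin n → ℝ) (yhat : Fin n × Fin n → ℝ)
    (hprimal : ∀ z : Fin n → ℝ, nLasso E W S α lam xhat ≤ nLasso E W S α lam z)
    (hfeas : ∀ e ∈ E, |yhat e| ≤ lam * W e)
    (hdual : ∀ y : Fin n × Fin n → ℝ, (∀ e ∈ E, |y e| ≤ lam * W e) →
      dualObj E S α y ≤ dualObj E S α yhat) :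
    (∀ i ∈ S, -divg E yhat i = xhat i - 1) ∧
    (∀ i ∉ S, -divg E yhat i = α * xhat i) :=
  nLasso_optimal_flow_conservation_general n E W S α lam hα xhat yhat hprimal hfeas hdual
end

section
/- Let x̂ minimize the nLasso objective h over ℝ^V and let ŷ maximize the dual objective D over all feasible flows. Let C = {i ∈ V : x̂_i > 1/2} be the thresholded cluster. Then every boundary edge is saturated with flow directed out of C: for every e = (i,j) ∈ ∂C, if i ∈ C then ŷ_e = λ W_e, and if j ∈ C then ŷ_e = −λ W_e. -/
/-!
Write `nLasso` as `∑ i, a i * (x i - b i) ^ 2 / 2 + lam * TV E W x` with `a = 1, b = 1` on `S` and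
`a = α, b = 0` off `S`; `dualObj` is its Fenchel dual over flows. A flow `y` determines the point
`x̃ = b - div y / a`. Shifting an optimal flow by `t` on one edge `e = (i, j)` changes the dual by
`t (x̃ i - x̃ j) - c t²` with `c > 0`, so dual optimality saturates `e` in the direction of
`sign (x̃ i - x̃ j)`. This is complementary slackness, so `x̃` has zero duality gap; since the gap at
any `x` dominates `∑ i, a i * (x i - x̃ i) ^ 2 / 2`, the primal minimiser is `x̃`. Across a boundary
edge of `C` the minimiser crosses the threshold `1/2`, which fixes the sign of the saturated flow.
-/

open Finset

section Duality

variable {n : ℕ} (E : Finset (Fin n × Fin n)) (W : Fin n × Fin n → ℝ) (a b : Fin n → ℝ)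
  (lam : ℝ)

theorem sum_mul_divg (y : Fin n × Fin n → ℝ) (x : Fin n → ℝ) :
    ∑ i, x i * divg E y i = ∑ e ∈ E, y e * (x e.1 - x e.2) := by
  have hnode : ∀ i, x i * divg E y i =
      ∑ e ∈ E.filter (·.1 = i), y e * x e.1 - ∑ e ∈ E.filter (·.2 = i), y e * x e.2 := by
    intro i
    rw [divg, mul_sub, mul_sum, mul_sum]
    congr 1 <;> refine sum_congr rfl fun e he => ?_ <;> rw [(mem_filter.mp he).2, mul_comm]
  simp only [hnode, sum_sub_distrib, sum_fiberwise, mul_sub]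

theorem divg_add_single (y : Fin n × Fin n → ℝ)
    {e : Fin n × Fin n} (he : e ∈ E) (t : ℝ) (i : Fin n) :
    divg E (y + Pi.single e t) i =
      divg E y i + ((if e.1 = i then t else 0) - if e.2 = i then t else 0) := by
  simp only [divg, Pi.add_apply, sum_add_distrib, Pi.single_apply, sum_ite_eq', mem_filter,
    he, true_and]
  ring

noncomputable def weightedTVObj (x : Fin n → ℝ) : ℝ :=
  ∑ i, a i * (x i - b i) ^ 2 / 2 + lam * TV E W x

noncomputable def weightedTVDual (y : Fin n × Fin n → ℝ) : ℝ :=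
  -∑ i, (divg E y i ^ 2 / (2 * a i) - b i * divg E y i)

/-- The minimiser in `x` of the Lagrangian
`∑ i, a i * (x i - b i) ^ 2 / 2 + ∑ i, x i * divg E y i`. -/
noncomputable def primalOfFlow (y : Fin n × Fin n → ℝ) (i : Fin n) : ℝ :=
  b i - divg E y i / a i

variable {E W a b lam}

theorem weightedTVObj_sub_weightedTVDual (ha : ∀ i, a i ≠ 0) (x : Fin n → ℝ)
    (y : Fin n × Fin n → ℝ) :
    weightedTVObj E W a b lam x - weightedTVDual E a b y =
      ∑ i, a i * (x i - primalOfFlow E a b y i) ^ 2 / 2 +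
        ∑ e ∈ E, (lam * W e * |x e.1 - x e.2| - y e * (x e.1 - x e.2)) := by
  have hnode : ∀ i, a i * (x i - b i) ^ 2 / 2 + (divg E y i ^ 2 / (2 * a i) - b i * divg E y i) =
      a i * (x i - primalOfFlow E a b y i) ^ 2 / 2 - x i * divg E y i := by
    intro i
    rw [primalOfFlow]
    field_simp [ha i]
    ring
  have hsum := sum_congr rfl fun i (_ : i ∈ univ) => hnode i
  simp only [sum_add_distrib, sum_sub_distrib] at hsum
  rw [sum_mul_divg E y x] at hsum
  rw [weightedTVObj, weightedTVDual, TV, mul_sum]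
  simp only [sum_sub_distrib, mul_assoc] at hsum ⊢
  linarith

theorem mul_le_mul_abs_of_abs_le {u v c : ℝ} (h : |u| ≤ c) : u * v ≤ c * |v| :=
  calc u * v ≤ |u| * |v| := (le_abs_self _).trans (abs_mul u v).le
    _ ≤ c * |v| := mul_le_mul_of_nonneg_right h (abs_nonneg v)

theorem sum_sq_sub_primalOfFlow_le (ha : ∀ i, 0 < a i) {y : Fin n × Fin n → ℝ}
    (hy : ∀ e ∈ E, |y e| ≤ lam * W e) (x : Fin n → ℝ) :
    ∑ i, a i * (x i - primalOfFlow E a b y i) ^ 2 / 2 ≤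
      weightedTVObj E W a b lam x - weightedTVDual E a b y := by
  rw [weightedTVObj_sub_weightedTVDual fun i => (ha i).ne', le_add_iff_nonneg_right]
  exact sum_nonneg fun e he => sub_nonneg.mpr (mul_le_mul_abs_of_abs_le (hy e he))

theorem weightedTVObj_primalOfFlow (ha : ∀ i, a i ≠ 0) {y : Fin n × Fin n → ℝ}
    (hslack : ∀ e ∈ E, y e * (primalOfFlow E a b y e.1 - primalOfFlow E a b y e.2) =
      lam * W e * |primalOfFlow E a b y e.1 - primalOfFlow E a b y e.2|) :
    weightedTVObj E W a b lam (primalOfFlow E a b y) = weightedTVDual E a b y := by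
  rw [← sub_eq_zero, weightedTVObj_sub_weightedTVDual ha]
  simp only [sub_self, zero_pow two_ne_zero, mul_zero, zero_div, sum_const_zero, zero_add]
  exact sum_eq_zero fun e he => by rw [hslack e he, sub_self]

theorem weightedTVDual_add_single (ha : ∀ i, a i ≠ 0) (y : Fin n × Fin n → ℝ)
    {e : Fin n × Fin n} (he : e ∈ E) (hloop : e.1 ≠ e.2) (t : ℝ) :
    weightedTVDual E a b (y + Pi.single e t) = weightedTVDual E a b y +
      t * (primalOfFlow E a b y e.1 - primalOfFlow E a b y e.2) -
      t ^ 2 * (1 / (2 * a e.1) + 1 / (2 * a e.2)) := by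
  set φ : Fin n → ℝ → ℝ := fun i d => d ^ 2 / (2 * a i) - b i * d
  have hnode : ∀ i, φ i (divg E (y + Pi.single e t) i) = φ i (divg E y i) +
      ((if e.1 = i then -(t * primalOfFlow E a b y i) + t ^ 2 / (2 * a i) else 0) +
        if e.2 = i then t * primalOfFlow E a b y i + t ^ 2 / (2 * a i) else 0) := by
    intro i
    rw [divg_add_single E y he]
    by_cases h1 : e.1 = i <;> by_cases h2 : e.2 = i
    · exact absurd (h1.trans h2.symm) hloop
    all_goals simp only [φ, primalOfFlow, h1, h2, if_true, if_false]; field_simp [ha i]; ring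
  change -∑ i, φ i _ = -∑ i, φ i _ + _ - _
  simp only [hnode, sum_add_distrib, sum_ite_eq, mem_univ, if_true]
  ring

theorem eq_zero_of_forall_mul_sub_sq_nonpos {A B s : ℝ} (hA : 0 < A) (hB : 0 < B) (hs : 0 ≤ s)
    (h : ∀ t ∈ Set.Icc 0 s, t * A - t ^ 2 * B ≤ 0) : s = 0 := by
  by_contra hs0
  set t := min s (A / (2 * B))
  have ht : 0 < t := lt_min (lt_of_le_of_ne hs (Ne.symm hs0)) (by positivity)
  have htB : t * B ≤ A / 2 := by
    calc t * B ≤ A / (2 * B) * B := mul_le_mul_of_nonneg_right (min_le_right _ _) hB.le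
      _ = A / 2 := by field_simp
  have := h t ⟨ht.le, min_le_left _ _⟩
  nlinarith

theorem flow_saturated_of_dual_optimal (ha : ∀ i, 0 < a i) {y : Fin n × Fin n → ℝ}
    (hy : ∀ e ∈ E, |y e| ≤ lam * W e)
    (hmax : ∀ z : Fin n × Fin n → ℝ, (∀ e ∈ E, |z e| ≤ lam * W e) →
      weightedTVDual E a b z ≤ weightedTVDual E a b y)
    {e : Fin n × Fin n} (he : e ∈ E) :
    (primalOfFlow E a b y e.2 < primalOfFlow E a b y e.1 → y e = lam * W e) ∧
      (primalOfFlow E a b y e.1 < primalOfFlow E a b y e.2 → y e = -(lam * W e)) := by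
  rcases eq_or_ne e.1 e.2 with hloop | hloop
  · simp [hloop]
  set A := primalOfFlow E a b y e.1 - primalOfFlow E a b y e.2
  set B := 1 / (2 * a e.1) + 1 / (2 * a e.2)
  have hB : 0 < B := by have := ha e.1; have := ha e.2; positivity
  have hstep : ∀ t, |y e + t| ≤ lam * W e → t * A - t ^ 2 * B ≤ 0 := by
    intro t ht
    have hfeas : ∀ f ∈ E, |(y + Pi.single e t : Fin n × Fin n → ℝ) f| ≤ lam * W f := by
      intro f hf
      rcases eq_or_ne f e with rfl | hfe
      · simpa using ht
      · simpa [hfe] using hy f hf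
    have := hmax _ hfeas
    rw [weightedTVDual_add_single (fun i => (ha i).ne') y he hloop] at this
    linarith
  obtain ⟨hlo, hhi⟩ := abs_le.mp (hy e he)
  constructor
  · intro hlt
    have := eq_zero_of_forall_mul_sub_sq_nonpos (sub_pos.mpr hlt) hB (sub_nonneg.mpr hhi)
      fun t ht => hstep t (abs_le.mpr ⟨by linarith [ht.1], by linarith [ht.2]⟩)
    linarith
  · intro hlt
    have := eq_zero_of_forall_mul_sub_sq_nonpos (neg_pos.mpr (sub_neg.mpr hlt)) hB
      (neg_le_iff_add_nonneg.mp hlo) fun t ht => by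
        have := hstep (-t) (abs_le.mpr ⟨by linarith [ht.2], by linarith [ht.1]⟩)
        linarith
    linarith

theorem flow_mul_sub_primalOfFlow_eq (ha : ∀ i, 0 < a i) {y : Fin n × Fin n → ℝ}
    (hy : ∀ e ∈ E, |y e| ≤ lam * W e)
    (hmax : ∀ z : Fin n × Fin n → ℝ, (∀ e ∈ E, |z e| ≤ lam * W e) →
      weightedTVDual E a b z ≤ weightedTVDual E a b y)
    {e : Fin n × Fin n} (he : e ∈ E) :
    y e * (primalOfFlow E a b y e.1 - primalOfFlow E a b y e.2) =
      lam * W e * |primalOfFlow E a b y e.1 - primalOfFlow E a b y e.2| := by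
  obtain ⟨hpos, hneg⟩ := flow_saturated_of_dual_optimal ha hy hmax he
  rcases lt_trichotomy (primalOfFlow E a b y e.1) (primalOfFlow E a b y e.2) with h | h | h
  · rw [hneg h, abs_of_neg (sub_neg.mpr h)]
    ring
  · simp [h]
  · rw [hpos h, abs_of_pos (sub_pos.mpr h)]

theorem eq_primalOfFlow_of_optimal (ha : ∀ i, 0 < a i) {x : Fin n → ℝ}
    {y : Fin n × Fin n → ℝ}
    (hmin : ∀ z : Fin n → ℝ, weightedTVObj E W a b lam x ≤ weightedTVObj E W a b lam z)
    (hy : ∀ e ∈ E, |y e| ≤ lam * W e)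
    (hmax : ∀ z : Fin n × Fin n → ℝ, (∀ e ∈ E, |z e| ≤ lam * W e) →
      weightedTVDual E a b z ≤ weightedTVDual E a b y) :
    x = primalOfFlow E a b y := by
  have hgap : weightedTVObj E W a b lam x - weightedTVDual E a b y ≤ 0 := by
    have := hmin (primalOfFlow E a b y)
    rw [weightedTVObj_primalOfFlow (fun i => (ha i).ne')
      fun e he => flow_mul_sub_primalOfFlow_eq ha hy hmax he] at this
    linarith
  have hterm : ∀ i ∈ univ, 0 ≤ a i * (x i - primalOfFlow E a b y i) ^ 2 / 2 :=
    fun i _ => by have := ha i; positivity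
  have hzero := (sum_eq_zero_iff_of_nonneg hterm).mp
    (le_antisymm ((sum_sq_sub_primalOfFlow_le ha hy x).trans hgap) (sum_nonneg hterm))
  funext i
  simpa [(ha i).ne', sub_eq_zero] using hzero i (mem_univ i)

end Duality

section NetworkLasso

variable {n : ℕ}

theorem nLasso_eq_weightedTVObj (E : Finset (Fin n × Fin n)) (W : Fin n × Fin n → ℝ)
    (S : Finset (Fin n)) (α lam : ℝ) :
    nLasso E W S α lam = weightedTVObj E W (fun i => if i ∈ S then 1 else α)
      (fun i => if i ∈ S then 1 else 0) lam := by
  funext x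
  rw [nLasso, weightedTVObj, ← sum_add_sum_compl (M := ℝ) S]
  congr 2 <;> refine sum_congr rfl fun i hi => ?_
  · simp [hi]
  · simp [mem_compl.mp hi]

theorem dualObj_eq_weightedTVDual (E : Finset (Fin n × Fin n)) (S : Finset (Fin n)) (α : ℝ) :
    dualObj E S α = weightedTVDual E (fun i => if i ∈ S then 1 else α)
      (fun i => if i ∈ S then 1 else 0) := by
  funext y
  rw [dualObj, weightedTVDual, ← sum_add_sum_compl (M := ℝ) S, neg_add, ← sub_eq_add_neg]
  congr 1
  · exact congrArg _ (sum_congr rfl fun i hi => by simp [hi])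
  · exact sum_congr rfl fun i hi => by simp [mem_compl.mp hi]

end NetworkLasso

theorem boundary_edges_saturated_general
    (n : ℕ) (E : Finset (Fin n × Fin n))
    (W : Fin n × Fin n → ℝ)
    (S : Finset (Fin n))
    (α lam : ℝ) (hα : 0 < α)
    (xhat : Fin n → ℝ) (yhat : Fin n × Fin n → ℝ)
    (hprimal : ∀ z : Fin n → ℝ, nLasso E W S α lam xhat ≤ nLasso E W S α lam z)
    (hfeas : ∀ e ∈ E, |yhat e| ≤ lam * W e)
    (hdual : ∀ y : Fin n × Fin n → ℝ, (∀ e ∈ E, |y e| ≤ lam * W e) →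
      dualObj E S α y ≤ dualObj E S α yhat)
    (C : Finset (Fin n)) (hC : C = Finset.univ.filter (fun i => 1 / 2 < xhat i)) :
    ∀ e ∈ bdry E C,
      (e.1 ∈ C → yhat e = lam * W e) ∧ (e.2 ∈ C → yhat e = -(lam * W e)) := by
  rw [nLasso_eq_weightedTVObj] at hprimal
  rw [dualObj_eq_weightedTVDual] at hdual
  have ha : ∀ i, 0 < if i ∈ S then 1 else α := fun i => by split <;> positivity
  have hx := eq_primalOfFlow_of_optimal ha hprimal hfeas hdual
  intro e he
  obtain ⟨heE, hcut⟩ := mem_filter.mp he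
  obtain ⟨hpos, hneg⟩ := flow_saturated_of_dual_optimal ha hfeas hdual heE
  rw [← hx] at hpos hneg
  subst hC
  simp only [mem_filter, mem_univ, true_and, not_lt] at hcut ⊢
  exact ⟨fun h1 => hpos (by rcases hcut with ⟨-, h⟩ | ⟨h, -⟩ <;> linarith),
    fun h2 => hneg (by rcases hcut with ⟨-, h⟩ | ⟨h, -⟩ <;> linarith)⟩

/-- At a primal-dual optimal pair, every boundary edge of the thresholded
cluster `C = {i : x̂_i > 1/2}` is saturated with flow directed out of `C`. -/
theorem boundary_edges_saturated
    (n : ℕ) (E : Finset (Fin n × Fin n)) (hE : ∀ e ∈ E, e.1 < e.2)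
    (W : Fin n × Fin n → ℝ) (hW : ∀ e ∈ E, 0 < W e)
    (S : Finset (Fin n)) (hS : S.Nonempty)
    (α lam : ℝ) (hα : 0 < α) (hlam : 0 < lam)
    (xhat : Fin n → ℝ) (yhat : Fin n × Fin n → ℝ)
    (hprimal : ∀ z : Fin n → ℝ, nLasso E W S α lam xhat ≤ nLasso E W S α lam z)
    (hfeas : ∀ e ∈ E, |yhat e| ≤ lam * W e)
    (hdual : ∀ y : Fin n × Fin n → ℝ, (∀ e ∈ E, |y e| ≤ lam * W e) →
      dualObj E S α y ≤ dualObj E S α yhat)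
    (C : Finset (Fin n)) (hC : C = Finset.univ.filter (fun i => 1 / 2 < xhat i)) :
    ∀ e ∈ bdry E C,
      (e.1 ∈ C → yhat e = lam * W e) ∧ (e.2 ∈ C → yhat e = -(lam * W e)) :=
  boundary_edges_saturated_general n E W S α lam hα xhat yhat hprimal hfeas hdual C hC
end
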